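/- Let G be a finite simple connected graph on n ≥ 2 vertices v_1,…,v_n with signless Laplacian spectral radius q(G), and for indices i,j set g(i,j) = (d_i + d_j + sqrt((d_i − d_j)^2 + 4 m_i m_j))/2. Then min{ g(i,j) : v_i ~ v_j } ≤ q(G) ≤ max{ g(i,j) : v_i ~ v_j }, where the minimum and maximum are taken over all adjacent pairs of vertices. -/

import Mathlib

open Matrix

/-- The spectral radius of a real square matrix: the largest modulus of its
complex eigenvalues. -/
noncomputable def specRad {n : ℕ} (M : Matrix (Fin n) (Fin n) ℝ) : ℝ :=
  sSup {x : ℝ | ∃ μ : ℂ, μ ∈ spectrum ℂ (M.map Complex.ofReal) ∧ x = ‖μ‖}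

/-- A square matrix is irreducible if for every pair of indices `(i, j)` there is a
positive power `k` with `(A ^ k) i j > 0`. -/
def MatIrred {n : ℕ} (M : Matrix (Fin n) (Fin n) ℝ) : Prop :=
  ∀ i j, ∃ k : ℕ, 0 < k ∧ 0 < (M ^ k) i j
lemma spec_map_eq {n : ℕ} (Q : Matrix (Fin n) (Fin n) ℝ) (hQ : Q.IsHermitian) :
    spectrum ℂ (Q.map Complex.ofReal) = Set.range (fun i => (hQ.eigenvalues i : ℂ)) := by
  classical
  set U : Matrix (Fin n) (Fin n) ℝ := (hQ.eigenvectorUnitary : Matrix (Fin n) (Fin n) ℝ) with hU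
  have hU1 : U * star U = 1 := Matrix.mem_unitaryGroup_iff.mp hQ.eigenvectorUnitary.2
  have hU2 : star U * U = 1 := Matrix.mem_unitaryGroup_iff'.mp hQ.eigenvectorUnitary.2
  have hmap : ∀ M : Matrix (Fin n) (Fin n) ℝ, M.map Complex.ofReal = M.map (Complex.ofRealHom : ℝ →+* ℂ) := fun _ => rfl
  set f : ℝ →+* ℂ := Complex.ofRealHom
  have hfu1 : U.map f * (star U).map f = 1 := by
    rw [← Matrix.map_mul, hU1]; simp [Matrix.map_one]
  have hfu2 : (star U).map f * U.map f = 1 := by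
    rw [← Matrix.map_mul, hU2]; simp [Matrix.map_one]
  set u : (Matrix (Fin n) (Fin n) ℂ)ˣ := ⟨U.map f, (star U).map f, hfu1, hfu2⟩ with hu
  have hQmap : Q.map Complex.ofReal =
      (u : Matrix (Fin n) (Fin n) ℂ) * Matrix.diagonal (fun i => (hQ.eigenvalues i : ℂ)) * ((u⁻¹ : (Matrix (Fin n) (Fin n) ℂ)ˣ) : Matrix (Fin n) (Fin n) ℂ) := by
    rw [hmap]
    conv_lhs => rw [hQ.spectral_theorem]
    rw [Unitary.conjStarAlgAut_apply]
    rw [Matrix.map_mul, Matrix.map_mul]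
    congr 1
    · congr 1
      rw [Matrix.diagonal_map (by simp)]
      congr 1
  rw [hQmap, spectrum.units_conjugate, spectrum_diagonal]

lemma shifted_posSemidef {n : ℕ} (Q : Matrix (Fin n) (Fin n) ℝ) (hQ : Q.IsHermitian)
    {q : ℝ} (h : ∀ i, hQ.eigenvalues i ≤ q) :
    (q • (1 : Matrix (Fin n) (Fin n) ℝ) - Q).PosSemidef := by
  classical
  set U : Matrix (Fin n) (Fin n) ℝ := (hQ.eigenvectorUnitary : Matrix (Fin n) (Fin n) ℝ) with hU
  have hU1 : U * star U = 1 := Matrix.mem_unitaryGroup_iff.mp hQ.eigenvectorUnitary.2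
  have key : q • (1 : Matrix (Fin n) (Fin n) ℝ) - Q
      = U * Matrix.diagonal (fun i => q - hQ.eigenvalues i) * Uᴴ := by
    have h1 : Matrix.diagonal (fun i : Fin n => q - hQ.eigenvalues i)
        = q • (1 : Matrix (Fin n) (Fin n) ℝ) - Matrix.diagonal (RCLike.ofReal ∘ hQ.eigenvalues) := by
      ext i j
      by_cases hij : i = j <;>
        simp [hij, Matrix.diagonal_apply, Matrix.one_apply, RCLike.ofReal_real_eq_id]
    rw [h1, Matrix.mul_sub, Matrix.sub_mul]
    have h2 : U * (q • (1 : Matrix (Fin n) (Fin n) ℝ)) * Uᴴ = q • (1 : Matrix (Fin n) (Fin n) ℝ) := by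
      rw [Matrix.mul_smul, Matrix.mul_one, Matrix.smul_mul]
      rw [show Uᴴ = star U from rfl, hU1]
    rw [h2]
    conv_lhs => rw [hQ.spectral_theorem]
    rfl
  rw [key]
  exact (Matrix.PosSemidef.diagonal (fun i => by simpa using h i)).mul_mul_conjTranspose_same U

lemma rayleigh_le {n : ℕ} (Q : Matrix (Fin n) (Fin n) ℝ) {q : ℝ}
    (hPSD : (q • (1 : Matrix (Fin n) (Fin n) ℝ) - Q).PosSemidef) (x : Fin n → ℝ) :
    x ⬝ᵥ (Q *ᵥ x) ≤ q * (x ⬝ᵥ x) := by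
  have h := hPSD.dotProduct_mulVec_nonneg x
  simp only [star_trivial] at h
  rw [Matrix.sub_mulVec, Matrix.smul_mulVec, Matrix.one_mulVec, dotProduct_sub,
    dotProduct_smul] at h
  simp only [smul_eq_mul] at h
  linarith

lemma rayleigh_eq_eigen {n : ℕ} (Q : Matrix (Fin n) (Fin n) ℝ) {q : ℝ}
    (hPSD : (q • (1 : Matrix (Fin n) (Fin n) ℝ) - Q).PosSemidef) (x : Fin n → ℝ)
    (heq : x ⬝ᵥ (Q *ᵥ x) = q * (x ⬝ᵥ x)) : Q *ᵥ x = q • x := by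
  have h := (hPSD.dotProduct_mulVec_zero_iff x).mp ?_
  · have := congrFun h
    funext k
    have hk := this k
    rw [Matrix.sub_mulVec, Matrix.smul_mulVec, Matrix.one_mulVec] at hk
    simp only [Pi.sub_apply, Pi.zero_apply, sub_eq_zero] at hk
    simp [← hk]
  · simp only [star_trivial]
    rw [Matrix.sub_mulVec, Matrix.smul_mulVec, Matrix.one_mulVec, dotProduct_sub,
      dotProduct_smul, heq]
    simp


set_option maxHeartbeats 1000000 in
theorem stmt_9 {n : ℕ} (hn : 2 ≤ n) (G : SimpleGraph (Fin n)) [DecidableRel G.Adj]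
    (hG : G.Connected)
    (m : Fin n → ℝ)
    (hm : ∀ i, m i = (∑ j ∈ G.neighborFinset i, (G.degree j : ℝ)) / (G.degree i : ℝ))
    (g : Fin n → Fin n → ℝ)
    (hg : ∀ i j, g i j = ((G.degree i : ℝ) + (G.degree j : ℝ) +
      Real.sqrt (((G.degree i : ℝ) - (G.degree j : ℝ)) ^ 2 + 4 * m i * m j)) / 2) :
    sInf {x | ∃ i j, G.Adj i j ∧ x = g i j} ≤
        specRad (Matrix.diagonal (fun i => (G.degree i : ℝ)) + G.adjMatrix ℝ) ∧
      specRad (Matrix.diagonal (fun i => (G.degree i : ℝ)) + G.adjMatrix ℝ) ≤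
        sSup {x | ∃ i j, G.Adj i j ∧ x = g i j} := by
  classical
  have hn1 : 1 < Fintype.card (Fin n) := by rw [Fintype.card_fin]; omega
  have hne : Nonempty (Fin n) := ⟨⟨0, by omega⟩⟩
  set d : Fin n → ℝ := fun i => (G.degree i : ℝ) with hd
  have hdc : ∀ i, (G.degree i : ℝ) = d i := fun i => rfl
  set Q : Matrix (Fin n) (Fin n) ℝ := Matrix.diagonal d + G.adjMatrix ℝ with hQdef
  -- Q is hermitian
  have hQH : Q.IsHermitian := by
    show Qᴴ = Q
    ext i j
    by_cases hij : i = j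
    · subst hij; simp [hQdef, Matrix.conjTranspose_apply]
    · have h2 : G.Adj j i ↔ G.Adj i j := G.adj_comm j i
      simp [hQdef, Matrix.conjTranspose_apply, Matrix.diagonal_apply, hij, Ne.symm hij, h2]
  set ev : Fin n → ℝ := hQH.eigenvalues with hev
  set q : ℝ := specRad Q with hqdef
  -- identify the spectral radius
  have hset : {x : ℝ | ∃ μ : ℂ, μ ∈ spectrum ℂ (Q.map Complex.ofReal) ∧ x = ‖μ‖}
      = Set.range (fun i => |ev i|) := by
    rw [spec_map_eq Q hQH]
    ext x
    constructor
    · rintro ⟨μ, ⟨i, rfl⟩, rfl⟩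
      exact ⟨i, by rw [Complex.norm_real, Real.norm_eq_abs]⟩
    · rintro ⟨i, rfl⟩
      exact ⟨(ev i : ℂ), ⟨i, rfl⟩, by rw [Complex.norm_real, Real.norm_eq_abs]⟩
  have hq_mem : ∃ i, |ev i| = q := by
    rw [hqdef, specRad, hset]
    exact (Set.range_nonempty _).csSup_mem (Set.finite_range _)
  have hq_ub : ∀ i, |ev i| ≤ q := by
    intro i
    rw [hqdef, specRad, hset]
    exact le_csSup (Set.finite_range _).bddAbove ⟨i, rfl⟩
  obtain ⟨i0, hi0⟩ := hq_mem
  have hq0 : 0 ≤ q := hi0 ▸ abs_nonneg _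
  have hev_le : ∀ i, ev i ≤ q := fun i => (le_abs_self _).trans (hq_ub i)
  have hPSD := shifted_posSemidef Q hQH hev_le
  -- entrywise nonnegativity
  have hQnn : ∀ k l, 0 ≤ Q k l := by
    intro k l
    simp only [hQdef, Matrix.add_apply, Matrix.diagonal_apply, SimpleGraph.adjMatrix_apply]
    apply add_nonneg
    · split_ifs <;> simp [hd]
    · split_ifs <;> norm_num
  -- nonnegative eigenvector for q
  set v : Fin n → ℝ := ⇑(hQH.eigenvectorBasis i0) with hv
  have hvQ : Q *ᵥ v = ev i0 • v := hQH.mulVec_eigenvectorBasis i0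
  have hvne : v ≠ 0 := by
    intro h
    apply hQH.eigenvectorBasis.orthonormal.ne_zero i0
    ext k
    exact congrFun h k
  set w : Fin n → ℝ := fun k => |v k| with hw
  have hwnn : ∀ k, 0 ≤ w k := fun k => abs_nonneg _
  have hwne : ∃ k, w k ≠ 0 := by
    obtain ⟨k, hk⟩ := Function.ne_iff.mp hvne
    have hk' : v k ≠ 0 := by simpa using hk
    exact ⟨k, by simp [hw, abs_ne_zero, hk']⟩
  have hww : w ⬝ᵥ w = v ⬝ᵥ v := by
    simp only [dotProduct, hw]
    exact Finset.sum_congr rfl fun k _ => abs_mul_abs_self _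
  have habs : |v ⬝ᵥ (Q *ᵥ v)| ≤ w ⬝ᵥ (Q *ᵥ w) := by
    have e1 : v ⬝ᵥ (Q *ᵥ v) = ∑ k, ∑ l, v k * (Q k l * v l) := by
      simp [dotProduct, Matrix.mulVec, Finset.mul_sum]
    have e2 : w ⬝ᵥ (Q *ᵥ w) = ∑ k, ∑ l, w k * (Q k l * w l) := by
      simp [dotProduct, Matrix.mulVec, Finset.mul_sum]
    rw [e1, e2]
    calc |∑ k, ∑ l, v k * (Q k l * v l)| ≤ ∑ k, |∑ l, v k * (Q k l * v l)| :=
          Finset.abs_sum_le_sum_abs _ _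
      _ ≤ ∑ k, ∑ l, |v k * (Q k l * v l)| :=
          Finset.sum_le_sum fun k _ => Finset.abs_sum_le_sum_abs _ _
      _ = ∑ k, ∑ l, w k * (Q k l * w l) := by
          refine Finset.sum_congr rfl fun k _ => Finset.sum_congr rfl fun l _ => ?_
          rw [abs_mul, abs_mul, abs_of_nonneg (hQnn k l)]
  have hvv_nn : 0 ≤ v ⬝ᵥ v := Finset.sum_nonneg fun k _ => mul_self_nonneg _
  have heq : w ⬝ᵥ (Q *ᵥ w) = q * (w ⬝ᵥ w) := by
    refine le_antisymm (rayleigh_le Q hPSD w) ?_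
    have h1 : v ⬝ᵥ (Q *ᵥ v) = ev i0 * (v ⬝ᵥ v) := by
      rw [hvQ, dotProduct_smul, smul_eq_mul]
    calc q * (w ⬝ᵥ w) = |ev i0| * (v ⬝ᵥ v) := by rw [hww, hi0]
      _ = |ev i0 * (v ⬝ᵥ v)| := by rw [abs_mul, abs_of_nonneg hvv_nn]
      _ = |v ⬝ᵥ (Q *ᵥ v)| := by rw [h1]
      _ ≤ w ⬝ᵥ (Q *ᵥ w) := habs
  have hQw : Q *ᵥ w = q • w := rayleigh_eq_eigen Q hPSD w heq
  -- componentwise eigen-equation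
  have hcomp : ∀ k, d k * w k + ∑ j ∈ G.neighborFinset k, w j = q * w k := by
    intro k
    have h := congrFun hQw k
    rw [hQdef, Matrix.add_mulVec] at h
    simp only [Pi.add_apply, Matrix.mulVec_diagonal, SimpleGraph.adjMatrix_mulVec_apply,
      Pi.smul_apply, smul_eq_mul] at h
    exact h
  -- strict positivity via connectivity
  have hprop : ∀ k, w k = 0 → ∀ j, G.Adj k j → w j = 0 := by
    intro k hk j hj
    have h := hcomp k
    rw [hk, mul_zero, mul_zero, zero_add] at h
    have := (Finset.sum_eq_zero_iff_of_nonneg fun j _ => hwnn j).mp h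
    exact this j (by simpa [SimpleGraph.mem_neighborFinset] using hj)
  have hwalk : ∀ (a b : Fin n), G.Walk a b → w a ≠ 0 → w b ≠ 0 := by
    intro a b p
    induction p with
    | nil => exact id
    | @cons x y z h p ih =>
      intro hx
      apply ih
      intro hy
      exact hx (hprop y hy x h.symm)
  have hwpos : ∀ k, 0 < w k := by
    obtain ⟨k0, hk0⟩ := hwne
    intro k
    rcases (hG.preconnected k0 k) with ⟨p⟩
    exact (hwnn k).lt_of_ne' (hwalk k0 k p hk0)
  -- degrees positive
  have hdpos : ∀ k, 0 < d k := by
    intro k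
    obtain ⟨l, hl⟩ := Fintype.exists_ne_of_one_lt_card hn1 k
    rcases (hG.preconnected k l) with ⟨p⟩
    cases p with
    | nil => exact absurd rfl (Ne.symm hl)
    | cons h _ =>
      have : 0 < G.degree k := (G.degree_pos_iff_exists_adj k).mpr ⟨_, h⟩
      simpa [hd] using this
  -- q dominates all degrees
  have hdge : ∀ k, d k ≤ q := by
    intro k
    have h := rayleigh_le Q hPSD (Pi.single k 1)
    rw [Matrix.mulVec_single] at h
    simp only [single_dotProduct, mul_one, Pi.single_eq_same] at h
    simp only [one_mul, MulOpposite.op_one, one_smul] at h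
    change Q k k ≤ q at h
    have hQkk : Q k k = d k := by
      simp [hQdef, Matrix.add_apply, SimpleGraph.adjMatrix_apply]
    rw [hQkk] at h
    linarith
  -- average-degree facts
  have hmi : ∀ k, m k * d k = ∑ j ∈ G.neighborFinset k, d j := by
    intro k
    rw [hm k]
    rw [div_mul_cancel₀ _ (ne_of_gt (by simpa [hd] using hdpos k))]
  have hmnn : ∀ k, 0 ≤ m k := by
    intro k
    rw [hm k]
    apply div_nonneg
    · exact Finset.sum_nonneg fun j _ => Nat.cast_nonneg _
    · exact Nat.cast_nonneg _
  -- normalized eigenvector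
  set y : Fin n → ℝ := fun k => w k / d k with hy
  have hypos : ∀ k, 0 < y k := fun k => div_pos (hwpos k) (hdpos k)
  have hwy : ∀ k, w k = d k * y k := by
    intro k
    rw [hy, mul_div_cancel₀ _ (ne_of_gt (hdpos k))]
  have hE : ∀ k, (q - d k) * (d k * y k) = ∑ j ∈ G.neighborFinset k, d j * y j := by
    intro k
    have h := hcomp k
    rw [hwy k] at h
    have hsum : ∑ j ∈ G.neighborFinset k, w j = ∑ j ∈ G.neighborFinset k, d j * y j :=
      Finset.sum_congr rfl fun j _ => hwy j
    rw [hsum] at h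
    ring_nf
    ring_nf at h
    linarith
  have hnbr : ∀ k, (G.neighborFinset k).Nonempty := by
    intro k
    rw [← Finset.card_pos, SimpleGraph.card_neighborFinset_eq_degree]
    have := hdpos k
    simp only [hd] at this
    exact_mod_cast this
  -- square root facts
  have hroot : ∀ i j : Fin n, G.Adj i j →
      ((q - d i) * (q - d j) ≤ m i * m j → q ≤ g i j) ∧
      (m i * m j ≤ (q - d i) * (q - d j) → g i j ≤ q) := by
    intro i j _
    set r : ℝ := Real.sqrt ((d i - d j) ^ 2 + 4 * m i * m j) with hr
    have hDnn : 0 ≤ (d i - d j) ^ 2 + 4 * m i * m j := by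
      have := mul_nonneg (hmnn i) (hmnn j)
      nlinarith [sq_nonneg (d i - d j)]
    have hr2 : r ^ 2 = (d i - d j) ^ 2 + 4 * m i * m j := Real.sq_sqrt hDnn
    have hr0 : 0 ≤ r := Real.sqrt_nonneg _
    have hrge : |d i - d j| ≤ r := by
      rw [hr, ← Real.sqrt_sq_eq_abs]
      apply Real.sqrt_le_sqrt
      nlinarith [mul_nonneg (hmnn i) (hmnn j)]
    have hrge1 : d i - d j ≤ r := (le_abs_self _).trans hrge
    have hrge2 : d j - d i ≤ r := by
      have h := neg_le_abs (d i - d j)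
      linarith
    have hgval : g i j = (d i + d j + r) / 2 := by rw [hg i j]
    have hprod : ((r + (d j - d i)) / 2) * ((r + (d i - d j)) / 2) = m i * m j := by
      linear_combination hr2 / 4
    constructor
    · intro hle
      by_contra hlt
      push_neg at hlt
      have hb1 : (r + (d j - d i)) / 2 < q - d i := by rw [hgval] at hlt; linarith
      have hb2 : (r + (d i - d j)) / 2 < q - d j := by rw [hgval] at hlt; linarith
      have ha1 : 0 ≤ (r + (d j - d i)) / 2 := by linarith
      have ha2 : 0 ≤ (r + (d i - d j)) / 2 := by linarith
      have := mul_lt_mul'' hb1 hb2 ha1 ha2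
      linarith [hle, hprod]
    · intro hle
      by_contra hlt
      push_neg at hlt
      have hb1 : q - d i < (r + (d j - d i)) / 2 := by rw [hgval] at hlt; linarith
      have hb2 : q - d j < (r + (d i - d j)) / 2 := by rw [hgval] at hlt; linarith
      have ha1 : 0 ≤ q - d i := by linarith [hdge i]
      have ha2 : 0 ≤ q - d j := by linarith [hdge j]
      have := mul_lt_mul'' hb1 hb2 ha1 ha2
      linarith [hle, hprod]
  -- upper bound: pick global max and neighborhood max
  obtain ⟨imax, -, himax⟩ := Finset.exists_max_image Finset.univ y Finset.univ_nonempty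
  obtain ⟨Jmax, hJmem, hJmax⟩ := Finset.exists_max_image (G.neighborFinset imax) y (hnbr imax)
  have hadjU : G.Adj imax Jmax := by simpa [SimpleGraph.mem_neighborFinset] using hJmem
  have hineqU1 : (q - d imax) * y imax ≤ m imax * y Jmax := by
    have h1 : (q - d imax) * (d imax * y imax) ≤ m imax * d imax * y Jmax := by
      rw [hE imax, hmi imax]
      calc ∑ j ∈ G.neighborFinset imax, d j * y j
          ≤ ∑ j ∈ G.neighborFinset imax, d j * y Jmax :=
            Finset.sum_le_sum fun j hj =>
              mul_le_mul_of_nonneg_left (hJmax j hj) (by linarith [hdpos j])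
        _ = (∑ j ∈ G.neighborFinset imax, d j) * y Jmax := by rw [← Finset.sum_mul]
    have h2 : d imax * ((q - d imax) * y imax) ≤ d imax * (m imax * y Jmax) := by nlinarith [h1]
    exact le_of_mul_le_mul_left h2 (hdpos imax)
  have hineqU2 : (q - d Jmax) * y Jmax ≤ m Jmax * y imax := by
    have h1 : (q - d Jmax) * (d Jmax * y Jmax) ≤ m Jmax * d Jmax * y imax := by
      rw [hE Jmax, hmi Jmax]
      calc ∑ j ∈ G.neighborFinset Jmax, d j * y j
          ≤ ∑ j ∈ G.neighborFinset Jmax, d j * y imax :=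
            Finset.sum_le_sum fun j _ =>
              mul_le_mul_of_nonneg_left (himax j (Finset.mem_univ j)) (by linarith [hdpos j])
        _ = (∑ j ∈ G.neighborFinset Jmax, d j) * y imax := by rw [← Finset.sum_mul]
    have h2 : d Jmax * ((q - d Jmax) * y Jmax) ≤ d Jmax * (m Jmax * y imax) := by nlinarith [h1]
    exact le_of_mul_le_mul_left h2 (hdpos Jmax)
  have hkeyU : (q - d imax) * (q - d Jmax) ≤ m imax * m Jmax := by
    have hq1 : 0 ≤ q - d imax := by linarith [hdge imax]
    have hq2 : 0 ≤ q - d Jmax := by linarith [hdge Jmax]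
    have h3 : ((q - d imax) * y imax) * ((q - d Jmax) * y Jmax)
        ≤ (m imax * y Jmax) * (m Jmax * y imax) :=
      mul_le_mul hineqU1 hineqU2 (mul_nonneg hq2 (hypos Jmax).le)
        (mul_nonneg (hmnn imax) (hypos Jmax).le)
    have h4 : (q - d imax) * (q - d Jmax) * (y imax * y Jmax)
        ≤ m imax * m Jmax * (y imax * y Jmax) := by nlinarith [h3]
    exact le_of_mul_le_mul_right h4 (mul_pos (hypos imax) (hypos Jmax))
  have hgU : q ≤ g imax Jmax := (hroot imax Jmax hadjU).1 hkeyU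
  -- lower bound: pick global min and neighborhood min
  obtain ⟨imin, -, himin⟩ := Finset.exists_min_image Finset.univ y Finset.univ_nonempty
  obtain ⟨Jmin, hJmem', hJmin⟩ := Finset.exists_min_image (G.neighborFinset imin) y (hnbr imin)
  have hadjL : G.Adj imin Jmin := by simpa [SimpleGraph.mem_neighborFinset] using hJmem'
  have hineqL1 : m imin * y Jmin ≤ (q - d imin) * y imin := by
    have h1 : m imin * d imin * y Jmin ≤ (q - d imin) * (d imin * y imin) := by
      rw [hE imin, hmi imin]
      calc (∑ j ∈ G.neighborFinset imin, d j) * y Jmin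
          = ∑ j ∈ G.neighborFinset imin, d j * y Jmin := by rw [Finset.sum_mul]
        _ ≤ ∑ j ∈ G.neighborFinset imin, d j * y j :=
            Finset.sum_le_sum fun j hj =>
              mul_le_mul_of_nonneg_left (hJmin j hj) (by linarith [hdpos j])
    have h2 : d imin * (m imin * y Jmin) ≤ d imin * ((q - d imin) * y imin) := by nlinarith [h1]
    exact le_of_mul_le_mul_left h2 (hdpos imin)
  have hineqL2 : m Jmin * y imin ≤ (q - d Jmin) * y Jmin := by
    have h1 : m Jmin * d Jmin * y imin ≤ (q - d Jmin) * (d Jmin * y Jmin) := by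
      rw [hE Jmin, hmi Jmin]
      calc (∑ j ∈ G.neighborFinset Jmin, d j) * y imin
          = ∑ j ∈ G.neighborFinset Jmin, d j * y imin := by rw [Finset.sum_mul]
        _ ≤ ∑ j ∈ G.neighborFinset Jmin, d j * y j :=
            Finset.sum_le_sum fun j _ =>
              mul_le_mul_of_nonneg_left (himin j (Finset.mem_univ j)) (by linarith [hdpos j])
    have h2 : d Jmin * (m Jmin * y imin) ≤ d Jmin * ((q - d Jmin) * y Jmin) := by nlinarith [h1]
    exact le_of_mul_le_mul_left h2 (hdpos Jmin)
  have hkeyL : m imin * m Jmin ≤ (q - d imin) * (q - d Jmin) := by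
    have hq1 : 0 ≤ q - d imin := by linarith [hdge imin]
    have hq2 : 0 ≤ q - d Jmin := by linarith [hdge Jmin]
    have h3 : (m imin * y Jmin) * (m Jmin * y imin)
        ≤ ((q - d imin) * y imin) * ((q - d Jmin) * y Jmin) :=
      mul_le_mul hineqL1 hineqL2 (mul_nonneg (hmnn Jmin) (hypos imin).le)
        (mul_nonneg hq1 (hypos imin).le)
    have h4 : m imin * m Jmin * (y imin * y Jmin)
        ≤ (q - d imin) * (q - d Jmin) * (y imin * y Jmin) := by nlinarith [h3]
    exact le_of_mul_le_mul_right h4 (mul_pos (hypos imin) (hypos Jmin))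
  have hgL : g imin Jmin ≤ q := (hroot imin Jmin hadjL).2 hkeyL
  -- finish
  have hSfin : {x : ℝ | ∃ i j, G.Adj i j ∧ x = g i j}.Finite := by
    apply Set.Finite.subset (Set.finite_range fun p : Fin n × Fin n => g p.1 p.2)
    rintro x ⟨i, j, -, rfl⟩
    exact ⟨(i, j), rfl⟩
  constructor
  · exact le_trans (csInf_le hSfin.bddBelow ⟨imin, Jmin, hadjL, rfl⟩) hgL
  · exact le_trans hgU (le_csSup hSfin.bddAbove ⟨imax, Jmax, hadjU, rfl⟩)
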